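/- The Q-QPFT of a 2D Gaussian: for f(x) = e^{-(k₁x₁² + k₂x₂²)} with k₁, k₂ > 0, Q^ℍ_{μ₁,μ₂}[f](w) = e^{-i(c₁w₁²+e₁w₁)} √(b₁i/(2(k₁+ia₁))) e^{-(b₁w₁+d₁)²/(4(k₁+ia₁))} · e^{-j(c₂w₂²+e₂w₂)} √(b₂j/(2(k₂+ja₂))) e^{-(b₂w₂+d₂)²/(4(k₂+ja₂))}, where each factor lies in the respective complex subfield ℝ⊕ℝi and ℝ⊕ℝj. -/

import Mathlib

open MeasureTheory Complex
open scoped ENNReal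

noncomputable section

abbrev ℍ := Quaternion ℝ

/-- Embedding of ℂ into ℍ along the i-axis. -/
def Ci (z : ℂ) : ℍ := ⟨z.re, z.im, 0, 0⟩
/-- Embedding of ℂ into ℍ along the j-axis. -/
def Cj (z : ℂ) : ℍ := ⟨z.re, 0, z.im, 0⟩

/-- principal square root in ℂ -/
def csqrt (z : ℂ) : ℂ := z ^ (1/2 : ℂ)

/-- quaternion exponential e^{iθ} -/
def expi (θ : ℝ) : ℍ := Ci (Complex.exp (θ * Complex.I))
/-- quaternion exponential e^{jθ} -/
def expj (θ : ℝ) : ℍ := Cj (Complex.exp (θ * Complex.I))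

structure QP where
  a : ℝ
  b : ℝ
  c : ℝ
  d : ℝ
  e : ℝ

def phase (μ : QP) (x w : ℝ) : ℝ :=
  μ.a * x^2 + μ.b * x * w + μ.c * w^2 + μ.d * x + μ.e * w

/-- left quadratic-phase kernel Λ^i_{μ}(x,w) -/
def kerI (μ : QP) (x w : ℝ) : ℍ :=
  Ci (csqrt (μ.b * Complex.I / (2 * Real.pi))) * expi (-(phase μ x w))

/-- right quadratic-phase kernel Λ^j_{μ}(x,w) -/
def kerJ (μ : QP) (x w : ℝ) : ℍ :=
  Cj (csqrt (μ.b * Complex.I / (2 * Real.pi))) * expj (-(phase μ x w))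

/-- two-sided quaternion quadratic-phase Fourier transform -/
def QQPFT (μ₁ μ₂ : QP) (f : ℝ × ℝ → ℍ) (w : ℝ × ℝ) : ℍ :=
  ∫ x : ℝ × ℝ, kerI μ₁ x.1 w.1 * f x * kerJ μ₂ x.2 w.2

/-- two-sided quaternion Fourier transform -/
def QFT (f : ℝ × ℝ → ℍ) (w : ℝ × ℝ) : ℍ :=
  (1 / (2 * Real.pi)) • ∫ x : ℝ × ℝ, expi (-(x.1 * w.1)) * f x * expj (-(x.2 * w.2))

/-! Both kernels and the Gaussian factor through the embeddings `Ci` and `Cj`, whose images sit on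
opposite sides of `f`, so Fubini splits the transform into `Ci (F₁) * Cj (F₂)`, where `Fₖ` is a
complex one-dimensional quadratic-phase transform of a Gaussian. Each `Fₖ` is the complex Gaussian
integral `∫ exp (-(k + a i) x² + β x + γ)`, computed by completing the square; its constants combine
as `√(b i / 2π) · √(π / (k + a i)) = √(b i / (2 (k + a i)))`, which holds for principal roots since
the two arguments lie in `[-π/2, π/2]` and `(-π/2, π/2)`. -/

open scoped Quaternion

open Real in
theorem csqrt_mul_of_arg_add_mem {z w : ℂ} (hz : z ≠ 0) (hw : w ≠ 0)
    (h : arg z + arg w ∈ Set.Ioc (-π) π) : csqrt (z * w) = csqrt z * csqrt w := by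
  rw [csqrt, csqrt, csqrt, cpow_def_of_ne_zero hz, cpow_def_of_ne_zero hw,
    cpow_def_of_ne_zero (mul_ne_zero hz hw), log_mul hz hw h, add_mul, Complex.exp_add]

theorem csqrt_mul_of_re_nonneg_of_re_pos {z w : ℂ} (hz : 0 ≤ z.re) (hw : 0 < w.re) :
    csqrt (z * w) = csqrt z * csqrt w := by
  rcases eq_or_ne z 0 with rfl | hz₀
  · simp [csqrt]
  have hw₀ : w ≠ 0 := by rintro rfl; simp at hw
  have hzarg := abs_le.mp (abs_arg_le_pi_div_two_iff.mpr hz)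
  have hwarg := abs_lt.mp (abs_arg_lt_pi_div_two_iff.mpr (Or.inl hw))
  exact csqrt_mul_of_arg_add_mem hz₀ hw₀ ⟨by linarith, by linarith⟩

theorem Ci_I_mul_Ci_I : Ci I * Ci I = -1 := by
  ext <;> simp only [Quaternion.re_mul, Quaternion.imI_mul, Quaternion.imJ_mul,
    Quaternion.imK_mul] <;> simp [Ci]

theorem Cj_I_mul_Cj_I : Cj I * Cj I = -1 := by
  ext <;> simp only [Quaternion.re_mul, Quaternion.imI_mul, Quaternion.imJ_mul,
    Quaternion.imK_mul] <;> simp [Cj]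

def ciAlgHom : ℂ →ₐ[ℝ] ℍ := Complex.liftAux (Ci I) Ci_I_mul_Ci_I

def cjAlgHom : ℂ →ₐ[ℝ] ℍ := Complex.liftAux (Cj I) Cj_I_mul_Cj_I

@[simp] theorem ciAlgHom_apply (z : ℂ) : ciAlgHom z = Ci z := by
  rw [ciAlgHom, Complex.liftAux_apply]
  ext <;> simp only [Quaternion.re_add, Quaternion.imI_add, Quaternion.imJ_add,
    Quaternion.imK_add, Quaternion.re_smul, Quaternion.imI_smul, Quaternion.imJ_smul,
    Quaternion.imK_smul] <;> simp [Ci]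

@[simp] theorem cjAlgHom_apply (z : ℂ) : cjAlgHom z = Cj z := by
  rw [cjAlgHom, Complex.liftAux_apply]
  ext <;> simp only [Quaternion.re_add, Quaternion.imI_add, Quaternion.imJ_add,
    Quaternion.imK_add, Quaternion.re_smul, Quaternion.imI_smul, Quaternion.imJ_smul,
    Quaternion.imK_smul] <;> simp [Cj]

theorem Ci_mul (z w : ℂ) : Ci (z * w) = Ci z * Ci w := by
  simpa using map_mul ciAlgHom z w

theorem Cj_mul (z w : ℂ) : Cj (z * w) = Cj z * Cj w := by
  simpa using map_mul cjAlgHom z w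

theorem Ci_ofReal (r : ℝ) : Ci r = r := by
  rw [← ciAlgHom_apply]; exact ciAlgHom.commutes r

theorem Cj_ofReal (r : ℝ) : Cj r = r := by
  rw [← cjAlgHom_apply]; exact cjAlgHom.commutes r

section Integral

variable {X : Type*} [MeasurableSpace X] {μ : Measure X} {F : X → ℂ}

theorem MeasureTheory.Integrable.Ci (hF : Integrable F μ) : Integrable (fun x => Ci (F x)) μ := by
  simpa using (LinearMap.toContinuousLinearMap ciAlgHom.toLinearMap).integrable_comp hF

theorem MeasureTheory.Integrable.Cj (hF : Integrable F μ) : Integrable (fun x => Cj (F x)) μ := by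
  simpa using (LinearMap.toContinuousLinearMap cjAlgHom.toLinearMap).integrable_comp hF

theorem integral_Ci (hF : Integrable F μ) : ∫ x, Ci (F x) ∂μ = Ci (∫ x, F x ∂μ) := by
  simpa using (LinearMap.toContinuousLinearMap ciAlgHom.toLinearMap).integral_comp_comm hF

theorem integral_Cj (hF : Integrable F μ) : ∫ x, Cj (F x) ∂μ = Cj (∫ x, F x ∂μ) := by
  simpa using (LinearMap.toContinuousLinearMap cjAlgHom.toLinearMap).integral_comp_comm hF

end Integral

theorem integral_prod_mul_of_integrable {α β A : Type*} [MeasurableSpace α] [MeasurableSpace β]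
    {μ : Measure α} {ν : Measure β} [SFinite μ] [SFinite ν] [NormedRing A] [NormedAlgebra ℝ A]
    [CompleteSpace A] {f : α → A} {g : β → A} (hf : Integrable f μ) (hg : Integrable g ν) :
    ∫ z, f z.1 * g z.2 ∂μ.prod ν = (∫ x, f x ∂μ) * ∫ y, g y ∂ν := by
  rw [integral_prod _ (hf.mul_prod hg)]
  simp_rw [integral_const_mul_of_integrable hg]
  exact integral_mul_const_of_integrable hf

def qpKernel (μ : QP) (x w : ℝ) : ℂ :=
  csqrt (μ.b * Complex.I / (2 * Real.pi)) * Complex.exp (↑(-(phase μ x w)) * Complex.I)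

def QPFT (μ : QP) (f : ℝ → ℂ) (w : ℝ) : ℂ :=
  ∫ x, qpKernel μ x w * f x

theorem kerI_eq_Ci_qpKernel (μ : QP) (x w : ℝ) : kerI μ x w = Ci (qpKernel μ x w) := by
  rw [kerI, expi, qpKernel, Ci_mul]

theorem kerJ_eq_Cj_qpKernel (μ : QP) (x w : ℝ) : kerJ μ x w = Cj (qpKernel μ x w) := by
  rw [kerJ, expj, qpKernel, Cj_mul]

theorem norm_qpKernel (μ : QP) (x w : ℝ) :
    ‖qpKernel μ x w‖ = ‖csqrt (μ.b * Complex.I / (2 * Real.pi))‖ := by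
  rw [qpKernel, norm_mul, norm_exp_ofReal_mul_I, mul_one]

theorem MeasureTheory.Integrable.qpKernel_mul {f : ℝ → ℂ} (hf : Integrable f) (μ : QP) (w : ℝ) :
    Integrable (fun x => qpKernel μ x w * f x) := by
  refine hf.bdd_mul ?_ (Filter.Eventually.of_forall fun x => (norm_qpKernel μ x w).le)
  refine Continuous.aestronglyMeasurable ?_
  unfold qpKernel phase
  fun_prop

theorem QQPFT_Ci_mul_Cj (μ₁ μ₂ : QP) {f g : ℝ → ℂ} (hf : Integrable f) (hg : Integrable g)
    (w : ℝ × ℝ) :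
    QQPFT μ₁ μ₂ (fun x => Ci (f x.1) * Cj (g x.2)) w = Ci (QPFT μ₁ f w.1) * Cj (QPFT μ₂ g w.2) := by
  have hsplit (x : ℝ × ℝ) : kerI μ₁ x.1 w.1 * (Ci (f x.1) * Cj (g x.2)) * kerJ μ₂ x.2 w.2 =
      Ci (qpKernel μ₁ x.1 w.1 * f x.1) * Cj (qpKernel μ₂ x.2 w.2 * g x.2) := by
    rw [kerI_eq_Ci_qpKernel, kerJ_eq_Cj_qpKernel, Ci_mul, mul_comm (qpKernel μ₂ _ _), Cj_mul]
    simp only [mul_assoc]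
  simp_rw [QQPFT, hsplit, Measure.volume_eq_prod]
  rw [integral_prod_mul_of_integrable (hf.qpKernel_mul μ₁ w.1).Ci (hg.qpKernel_mul μ₂ w.2).Cj,
    integral_Ci (hf.qpKernel_mul μ₁ w.1), integral_Cj (hg.qpKernel_mul μ₂ w.2), QPFT, QPFT]

theorem QPFT_gaussian (μ : QP) {k : ℝ} (hk : 0 < k) (w : ℝ) :
    QPFT μ (fun x => ((Real.exp (-(k * x ^ 2)) : ℝ) : ℂ)) w =
      Complex.exp (-(μ.c * w ^ 2 + μ.e * w : ℝ) * Complex.I) *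
        csqrt (μ.b * Complex.I / (2 * ((k : ℂ) + (μ.a : ℂ) * Complex.I))) *
        Complex.exp (-((μ.b * w + μ.d : ℝ) : ℂ) ^ 2 / (4 * ((k : ℂ) + (μ.a : ℂ) * Complex.I))) := by
  set z : ℂ := k + μ.a * Complex.I
  set C : ℂ := csqrt (μ.b * Complex.I / (2 * Real.pi))
  have hz : 0 < z.re := by simpa [z]
  have hz₀ : z ≠ 0 := by rintro h; simp [h] at hz
  have hexponent (x : ℝ) : qpKernel μ x w * ↑(Real.exp (-(k * x ^ 2))) =
      C * Complex.exp (-z * x ^ 2 + (-(μ.b * w + μ.d : ℝ) * Complex.I) * x +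
        (-(μ.c * w ^ 2 + μ.e * w : ℝ) * Complex.I)) := by
    rw [qpKernel, mul_assoc, ofReal_exp, ← Complex.exp_add]
    congr 2
    simp only [phase, z]
    push_cast
    ring
  have hquadratic : -(μ.c * w ^ 2 + μ.e * w : ℝ) * Complex.I -
      (-(μ.b * w + μ.d : ℝ) * Complex.I) ^ 2 / (4 * -z) =
      -(μ.c * w ^ 2 + μ.e * w : ℝ) * Complex.I + -((μ.b * w + μ.d : ℝ) : ℂ) ^ 2 / (4 * z) := by
    rw [mul_pow, I_sq]
    field_simp
    ring
  have hsqrt : C * (Real.pi / z) ^ (1 / 2 : ℂ) = csqrt (μ.b * Complex.I / (2 * z)) := by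
    have hπz : 0 < ((Real.pi : ℂ) / z).re := by
      rw [div_eq_mul_inv, re_ofReal_mul, inv_re]
      exact mul_pos Real.pi_pos (div_pos hz (normSq_pos.mpr hz₀))
    rw [← csqrt, ← csqrt_mul_of_re_nonneg_of_re_pos (by simp [div_re]) hπz]
    congr 1
    field_simp
  simp_rw [QPFT, hexponent]
  rw [integral_const_mul, integral_cexp_quadratic (by simpa using hz), neg_neg, hquadratic,
    Complex.exp_add, ← hsqrt]
  ring

theorem integrable_ofReal_exp_neg_mul_sq {k : ℝ} (hk : 0 < k) :
    Integrable fun x : ℝ => ((Real.exp (-(k * x ^ 2)) : ℝ) : ℂ) := by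
  simpa only [neg_mul, ofRealCLM_apply] using
    ofRealCLM.integrable_comp (integrable_exp_neg_mul_sq hk)

theorem qqpft_gaussian_general (μ₁ μ₂ : QP)
    (k₁ k₂ : ℝ) (hk₁ : 0 < k₁) (hk₂ : 0 < k₂) (w : ℝ × ℝ) :
    QQPFT μ₁ μ₂ (fun x => ((Real.exp (-(k₁ * x.1^2 + k₂ * x.2^2)) : ℝ) : ℍ)) w
      = Ci (Complex.exp (-(μ₁.c * w.1^2 + μ₁.e * w.1 : ℝ) * Complex.I) *
            csqrt (μ₁.b * Complex.I / (2 * ((k₁ : ℂ) + (μ₁.a : ℂ) * Complex.I))) *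
            Complex.exp (-((μ₁.b * w.1 + μ₁.d : ℝ) : ℂ)^2 /
              (4 * ((k₁ : ℂ) + (μ₁.a : ℂ) * Complex.I)))) *
        Cj (Complex.exp (-(μ₂.c * w.2^2 + μ₂.e * w.2 : ℝ) * Complex.I) *
            csqrt (μ₂.b * Complex.I / (2 * ((k₂ : ℂ) + (μ₂.a : ℂ) * Complex.I))) *
            Complex.exp (-((μ₂.b * w.2 + μ₂.d : ℝ) : ℂ)^2 /
              (4 * ((k₂ : ℂ) + (μ₂.a : ℂ) * Complex.I)))) := by
  have hseparate : (fun x : ℝ × ℝ => ((Real.exp (-(k₁ * x.1 ^ 2 + k₂ * x.2 ^ 2)) : ℝ) : ℍ)) =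
      fun x => Ci (Real.exp (-(k₁ * x.1 ^ 2))) * Cj (Real.exp (-(k₂ * x.2 ^ 2))) := by
    funext x
    rw [Ci_ofReal, Cj_ofReal, ← Quaternion.coe_mul, ← Real.exp_add, neg_add]
  rw [hseparate, QQPFT_Ci_mul_Cj μ₁ μ₂ (integrable_ofReal_exp_neg_mul_sq hk₁)
    (integrable_ofReal_exp_neg_mul_sq hk₂), QPFT_gaussian μ₁ hk₁, QPFT_gaussian μ₂ hk₂]

/-- The Q-QPFT of a 2D Gaussian `f(x) = e^{-(k₁x₁² + k₂x₂²)}`. -/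
theorem qqpft_gaussian (μ₁ μ₂ : QP) (hb₁ : μ₁.b ≠ 0) (hb₂ : μ₂.b ≠ 0)
    (k₁ k₂ : ℝ) (hk₁ : 0 < k₁) (hk₂ : 0 < k₂) (w : ℝ × ℝ) :
    QQPFT μ₁ μ₂ (fun x => ((Real.exp (-(k₁ * x.1^2 + k₂ * x.2^2)) : ℝ) : ℍ)) w
      = Ci (Complex.exp (-(μ₁.c * w.1^2 + μ₁.e * w.1 : ℝ) * Complex.I) *
            csqrt (μ₁.b * Complex.I / (2 * ((k₁ : ℂ) + (μ₁.a : ℂ) * Complex.I))) *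
            Complex.exp (-((μ₁.b * w.1 + μ₁.d : ℝ) : ℂ)^2 /
              (4 * ((k₁ : ℂ) + (μ₁.a : ℂ) * Complex.I)))) *
        Cj (Complex.exp (-(μ₂.c * w.2^2 + μ₂.e * w.2 : ℝ) * Complex.I) *
            csqrt (μ₂.b * Complex.I / (2 * ((k₂ : ℂ) + (μ₂.a : ℂ) * Complex.I))) *
            Complex.exp (-((μ₂.b * w.2 + μ₂.d : ℝ) : ℂ)^2 /
              (4 * ((k₂ : ℂ) + (μ₂.a : ℂ) * Complex.I)))) :=
  qqpft_gaussian_general μ₁ μ₂ k₁ k₂ hk₁ hk₂ w
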